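/- Let θ : ℝ → ℝ be C¹, bounded, even, and nonincreasing on [0,∞). Then for all 0 < x₂ < x₁, ∫_{x₂}^{x₁} Hθ(x)·θ'(x) dx ≥ (1/(4π))·log((x₁+x₂)/(x₁−x₂))·(θ(x₂)−θ(x₁))². -/

import Mathlib

open MeasureTheory Filter Set Topology

/-- The Hilbert transform of an even function `θ`,
`Hθ(x) = (2x/π)·∫₀^∞ (θ(y)-θ(x))/(y²-x²) dy` (for `C¹` functions the integrand extends
continuously across `y = x`, so the integral needs no principal value there). -/
noncomputable def hilbertEven (θ : ℝ → ℝ) (x : ℝ) : ℝ :=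
  (2 * x / Real.pi) * ∫ y in Set.Ioi (0:ℝ), (θ y - θ x) / (y ^ 2 - x ^ 2)

/-!
For `0 < x₂ < x`, the kernel `(θ y - θ x)/(y² - x²)` is nonpositive on `(0, ∞)`, and on
`(0, x₂]` it is at most `-(θ x₂ - θ x)/(x² - y²)`, since `θ y ≥ θ x₂` there. Integrating gives
`Hθ(x) ≤ -(1/π) log((x+x₂)/(x-x₂)) (θ x₂ - θ x)`, and the logarithm only grows as `x` decreases
to `x₂`. Multiplying by `θ'(x) ≤ 0` and using
`∫_{x₂}^{x₁} (θ x₂ - θ x)(-θ' x) dx = (θ x₂ - θ x₁)²/2` gives the bound, even with `1/(2π)` in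
place of `1/(4π)`.

Since a non-integrable integrand would have integral `0`, one also needs `Hθ` bounded on
`[x₂, x₁]`: the kernel is dominated, uniformly in `x`, by an integrable function (a Lipschitz
bound near `y = x`, `O(y⁻²)` at infinity).
-/

open Real

section Kernel

variable {f : ℝ → ℝ} {x y : ℝ}

lemma div_sq_sub_sq_nonpos_of_antitoneOn (hf : AntitoneOn f (Ici 0)) (hx : 0 < x) (hy : 0 < y) :
    (f y - f x) / (y ^ 2 - x ^ 2) ≤ 0 := by
  rcases le_total y x with hyx | hxy
  · exact div_nonpos_of_nonneg_of_nonpos (sub_nonneg.2 (hf hy.le hx.le hyx)) (by nlinarith)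
  · exact div_nonpos_of_nonpos_of_nonneg (sub_nonpos.2 (hf hx.le hy.le hxy)) (by nlinarith)

lemma abs_div_sq_sub_sq_le_of_abs_sub_le {C : ℝ} (hC : 0 ≤ C) (hx : 0 < x) (hy : 0 < y)
    (hf : |f y - f x| ≤ C * |y - x|) : |(f y - f x) / (y ^ 2 - x ^ 2)| ≤ C / x := by
  rw [abs_div]
  refine div_le_of_le_mul₀ (abs_nonneg _) (by positivity) ?_
  calc |f y - f x| ≤ C * |y - x| := hf
    _ = C / x * (|y - x| * x) := by field_simp
    _ ≤ C / x * (|y - x| * (y + x)) := by gcongr; linarith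
    _ = C / x * |y ^ 2 - x ^ 2| := by
        rw [show y ^ 2 - x ^ 2 = (y - x) * (y + x) by ring, abs_mul,
          abs_of_pos (by linarith : 0 < y + x)]

lemma abs_div_sq_sub_sq_le_of_abs_le {M : ℝ} (hf : ∀ z, |f z| ≤ M) (hx : 0 < x)
    (hxy : 2 * x ≤ y) : |(f y - f x) / (y ^ 2 - x ^ 2)| ≤ 4 * M / y ^ 2 := by
  have hy : 0 < y := by linarith
  have hM : 0 ≤ M := (abs_nonneg _).trans (hf 0)
  have hden : y ^ 2 / 2 ≤ y ^ 2 - x ^ 2 := by nlinarith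
  rw [abs_div]
  refine div_le_of_le_mul₀ (abs_nonneg _) (by positivity) ?_
  calc |f y - f x| ≤ |f y| + |f x| := abs_sub _ _
    _ ≤ 2 * M := by linarith [hf x, hf y]
    _ = 4 * M / y ^ 2 * (y ^ 2 / 2) := by field_simp; ring
    _ ≤ 4 * M / y ^ 2 * |y ^ 2 - x ^ 2| := by
        gcongr
        exact hden.trans (le_abs_self _)

end Kernel

variable {θ : ℝ → ℝ} {M a b x : ℝ}

lemma exists_integrableOn_bound_div_sq_sub_sq (hθ : ContDiff ℝ 1 θ) (hM : ∀ z, |θ z| ≤ M)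
    (ha : 0 < a) (hab : a ≤ b) :
    ∃ g : ℝ → ℝ, IntegrableOn g (Ioi 0) ∧
      ∀ x ∈ Icc a b, ∀ y ∈ Ioi 0, |(θ y - θ x) / (y ^ 2 - x ^ 2)| ≤ g y := by
  obtain ⟨K, hK⟩ := hθ.contDiffOn.exists_lipschitzOnWith one_ne_zero (convex_Icc 0 (2 * b))
    isCompact_Icc
  refine ⟨fun y => if y ≤ 2 * b then K / a else 4 * M / y ^ 2, ?_, fun x hx y hy => ?_⟩
  · have hhead : IntegrableOn (fun _ : ℝ => (K / a : ℝ)) (Ioc 0 (2 * b)) :=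
      integrableOn_const measure_Ioc_lt_top.ne
    have htail : IntegrableOn (fun y : ℝ => 4 * M * y ^ (-2 : ℝ)) (Ioi (2 * b)) :=
      (integrableOn_Ioi_rpow_of_lt (by norm_num) (by linarith)).const_mul _
    rw [← Ioc_union_Ioi_eq_Ioi (by linarith : (0 : ℝ) ≤ 2 * b)]
    refine (hhead.congr_fun (fun y hy => (if_pos hy.2).symm) measurableSet_Ioc).union
      (htail.congr_fun (fun y hy => ?_) measurableSet_Ioi)
    have hy' : 2 * b < y := hy
    dsimp only
    rw [if_neg (not_le.2 hy'), rpow_neg (by linarith), rpow_two, div_eq_mul_inv]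
  · have hx0 : 0 < x := ha.trans_le hx.1
    dsimp only
    split_ifs with hyb
    · have hlip : |θ y - θ x| ≤ K * |y - x| := by
        simpa only [Real.dist_eq] using
          hK.dist_le_mul y ⟨hy.le, hyb⟩ x ⟨hx0.le, by linarith [hx.2]⟩
      exact (abs_div_sq_sub_sq_le_of_abs_sub_le K.2 hx0 hy hlip).trans
        (div_le_div_of_nonneg_left K.2 ha hx.1)
    · exact abs_div_sq_sub_sq_le_of_abs_le hM hx0 (by linarith [hx.2])

lemma integrableOn_div_sq_sub_sq (hθ : ContDiff ℝ 1 θ) (hM : ∀ z, |θ z| ≤ M) (hx : 0 < x) :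
    IntegrableOn (fun y => (θ y - θ x) / (y ^ 2 - x ^ 2)) (Ioi 0) := by
  obtain ⟨g, hg, hbound⟩ := exists_integrableOn_bound_div_sq_sub_sq hθ hM hx le_rfl
  have hmeas : Measurable fun y => (θ y - θ x) / (y ^ 2 - x ^ 2) := by
    have := hθ.continuous
    fun_prop
  refine hg.mono' hmeas.aestronglyMeasurable ?_
  filter_upwards [ae_restrict_mem measurableSet_Ioi] with y hy
  exact hbound x ⟨le_rfl, le_rfl⟩ y hy

lemma stronglyMeasurable_hilbertEven (hθ : Continuous θ) : StronglyMeasurable (hilbertEven θ) := by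
  have hker : Measurable fun p : ℝ × ℝ => (θ p.2 - θ p.1) / (p.2 ^ 2 - p.1 ^ 2) := by fun_prop
  exact (by fun_prop : Continuous fun x : ℝ => 2 * x / π).stronglyMeasurable.mul
    hker.stronglyMeasurable.integral_prod_right'

lemma exists_abs_hilbertEven_le (hθ : ContDiff ℝ 1 θ) (hM : ∀ z, |θ z| ≤ M) (ha : 0 < a)
    (hab : a ≤ b) : ∃ B, ∀ x ∈ Icc a b, |hilbertEven θ x| ≤ B := by
  obtain ⟨g, hg, hbound⟩ := exists_integrableOn_bound_div_sq_sub_sq hθ hM ha hab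
  refine ⟨2 * b / π * ∫ y in Ioi 0, g y, fun x hx => ?_⟩
  have hx0 : 0 < x := ha.trans_le hx.1
  have hint : ‖∫ y in Ioi 0, (θ y - θ x) / (y ^ 2 - x ^ 2)‖ ≤ ∫ y in Ioi 0, g y :=
    norm_integral_le_of_norm_le hg ((ae_restrict_mem measurableSet_Ioi).mono (hbound x hx))
  rw [Real.norm_eq_abs] at hint
  rw [hilbertEven, abs_mul, abs_of_pos (by positivity)]
  have hb : 0 < b := hx0.trans_le hx.2
  exact mul_le_mul (by gcongr; exact hx.2) hint (abs_nonneg _) (by positivity)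

lemma intervalIntegrable_hilbertEven_mul_deriv (hθ : ContDiff ℝ 1 θ) (hM : ∀ z, |θ z| ≤ M)
    (ha : 0 < a) (hab : a ≤ b) :
    IntervalIntegrable (fun x => hilbertEven θ x * deriv θ x) volume a b := by
  obtain ⟨B, hB⟩ := exists_abs_hilbertEven_le hθ hM ha hab
  rw [intervalIntegrable_iff_integrableOn_Icc_of_le hab]
  refine ((hθ.continuous_deriv le_rfl).integrableOn_Icc).bdd_mul (c := B)
    (stronglyMeasurable_hilbertEven hθ.continuous).aestronglyMeasurable ?_
  filter_upwards [ae_restrict_mem measurableSet_Icc] with x hx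
  exact hB x hx

lemma integral_inv_sq_sub_sq (ha : 0 ≤ a) (hax : a < x) :
    ∫ y in 0..a, (x ^ 2 - y ^ 2)⁻¹ = log ((x + a) / (x - a)) / (2 * x) := by
  have hx : 0 < x := ha.trans_lt hax
  have hderiv : ∀ y ∈ uIcc 0 a, HasDerivAt (fun y => (log (x + y) - log (x - y)) / (2 * x))
      (x ^ 2 - y ^ 2)⁻¹ y := by
    intro y hy
    rw [uIcc_of_le ha] at hy
    have hxy₁ : 0 < x + y := by linarith [hy.1]
    have hxy₂ : 0 < x - y := by linarith [hy.2]
    have h₁ : HasDerivAt (fun y => log (x + y)) (x + y)⁻¹ y := by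
      simpa using ((hasDerivAt_id y).const_add x).log hxy₁.ne'
    have h₂ : HasDerivAt (fun y => log (x - y)) (-1 / (x - y)) y := by
      simpa using ((hasDerivAt_id y).const_sub x).log hxy₂.ne'
    have hne : x ^ 2 - y ^ 2 ≠ 0 := (by nlinarith : 0 < x ^ 2 - y ^ 2).ne'
    refine ((h₁.sub h₂).div_const (2 * x)).congr_deriv ?_
    field_simp
    ring
  have hcont : ContinuousOn (fun y : ℝ => (x ^ 2 - y ^ 2)⁻¹) (uIcc 0 a) := by
    refine ContinuousOn.inv₀ (by fun_prop) fun y hy => ?_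
    rw [uIcc_of_le ha] at hy
    nlinarith [hy.1, hy.2]
  rw [intervalIntegral.integral_eq_sub_of_hasDerivAt hderiv hcont.intervalIntegrable,
    log_div (by linarith) (by linarith)]
  simp

lemma hilbertEven_le (hmono : AntitoneOn θ (Ici 0))
    (hint : IntegrableOn (fun y => (θ y - θ x) / (y ^ 2 - x ^ 2)) (Ioi 0))
    (ha : 0 < a) (hax : a < x) :
    hilbertEven θ x ≤ -(log ((x + a) / (x - a)) / π * (θ a - θ x)) := by
  have hx : 0 < x := ha.trans hax
  set f := fun y => (θ y - θ x) / (y ^ 2 - x ^ 2)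
  have hsplit : ∫ y in Ioi 0, f y = (∫ y in Ioc 0 a, f y) + ∫ y in Ioi a, f y := by
    rw [← setIntegral_union (Ioc_disjoint_Ioi le_rfl) measurableSet_Ioi
      (hint.mono_set Ioc_subset_Ioi_self) (hint.mono_set (Ioi_subset_Ioi ha.le)),
      Ioc_union_Ioi_eq_Ioi ha.le]
  have htail : ∫ y in Ioi a, f y ≤ 0 := setIntegral_nonpos measurableSet_Ioi
    fun y hy => div_sq_sub_sq_nonpos_of_antitoneOn hmono hx (ha.trans hy)
  have hhead : ∫ y in Ioc 0 a, f y ≤ ∫ y in Ioc 0 a, -(θ a - θ x) * (x ^ 2 - y ^ 2)⁻¹ := by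
    refine setIntegral_mono_on (hint.mono_set Ioc_subset_Ioi_self) ?_ measurableSet_Ioc ?_
    · refine (ContinuousOn.integrableOn_Icc ?_).mono_set Ioc_subset_Icc_self
      refine continuousOn_const.mul (ContinuousOn.inv₀ (by fun_prop) fun y hy => ?_)
      nlinarith [hy.1, hy.2]
    · intro y hy
      have hθy : θ a ≤ θ y := hmono hy.1.le ha.le hy.2
      have hden : 0 < x ^ 2 - y ^ 2 := by nlinarith [hy.1, hy.2]
      simp only [f, div_eq_mul_inv, ← neg_sub (x ^ 2), inv_neg, mul_neg, neg_mul]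
      exact neg_le_neg (mul_le_mul_of_nonneg_right (by linarith) (inv_nonneg.2 hden.le))
  have hkernel : ∫ y in Ioc 0 a, (x ^ 2 - y ^ 2)⁻¹ = log ((x + a) / (x - a)) / (2 * x) := by
    rw [← intervalIntegral.integral_of_le ha.le, integral_inv_sq_sub_sq ha.le hax]
  rw [integral_const_mul, hkernel] at hhead
  calc hilbertEven θ x = 2 * x / π * ∫ y in Ioi 0, f y := rfl
    _ ≤ 2 * x / π * (-(θ a - θ x) * (log ((x + a) / (x - a)) / (2 * x))) := by
        gcongr; linarith
    _ = -(log ((x + a) / (x - a)) / π * (θ a - θ x)) := by field_simp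

lemma log_div_mul_le_hilbertEven_mul_deriv (hθ : ContDiff ℝ 1 θ) (hM : ∀ z, |θ z| ≤ M)
    (hmono : AntitoneOn θ (Ici 0)) (ha : 0 < a) (hax : a < x) (hxb : x ≤ b) :
    log ((b + a) / (b - a)) / π * ((θ a - θ x) * -deriv θ x) ≤ hilbertEven θ x * deriv θ x := by
  have hx : 0 < x := ha.trans hax
  have hθ' : deriv θ x ≤ 0 :=
    derivWithin_of_mem_nhds (f := θ) (Ici_mem_nhds hx) ▸ hmono.derivWithin_nonpos
  have hθx : 0 ≤ θ a - θ x := sub_nonneg.2 (hmono ha.le hx.le hax.le)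
  have hlog : log ((b + a) / (b - a)) ≤ log ((x + a) / (x - a)) := by
    refine log_le_log (div_pos (by linarith) (by linarith)) ?_
    rw [div_le_div_iff₀ (by linarith) (by linarith)]
    nlinarith
  calc log ((b + a) / (b - a)) / π * ((θ a - θ x) * -deriv θ x)
      ≤ log ((x + a) / (x - a)) / π * ((θ a - θ x) * -deriv θ x) := by
        gcongr
        exact mul_nonneg hθx (neg_nonneg.2 hθ')
    _ = -(log ((x + a) / (x - a)) / π * (θ a - θ x)) * deriv θ x := by ring
    _ ≤ hilbertEven θ x * deriv θ x :=
        mul_le_mul_of_nonpos_right (hilbertEven_le hmono (integrableOn_div_sq_sub_sq hθ hM hx)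
          ha hax) hθ'

lemma integral_sub_mul_neg_deriv (hθ : ContDiff ℝ 1 θ) (a b : ℝ) :
    ∫ x in a..b, (θ a - θ x) * -deriv θ x = (θ a - θ b) ^ 2 / 2 := by
  have hderiv : ∀ x ∈ uIcc a b,
      HasDerivAt (fun x => (θ a - θ x) ^ 2 / 2) ((θ a - θ x) * -deriv θ x) x := by
    intro x _
    have hd : HasDerivAt θ (deriv θ x) x := ((hθ.differentiable one_ne_zero) x).hasDerivAt
    refine (((hd.const_sub (θ a)).fun_pow 2).div_const 2).congr_deriv ?_
    push_cast
    ring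
  have hcont : Continuous fun x => (θ a - θ x) * -deriv θ x := by
    have := hθ.continuous_deriv le_rfl
    fun_prop
  rw [intervalIntegral.integral_eq_sub_of_hasDerivAt hderiv (hcont.intervalIntegrable a b)]
  simp

theorem stmt_13_general (θ : ℝ → ℝ)
    (hC1 : ContDiff ℝ 1 θ)
    (hbdd : ∃ M : ℝ, ∀ x : ℝ, |θ x| ≤ M)
    (hmono : AntitoneOn θ (Set.Ici 0))
    (x₁ x₂ : ℝ) (hx₂ : 0 < x₂) (hx₁ : x₂ < x₁) :
    (1 / (4 * Real.pi)) * Real.log ((x₁ + x₂) / (x₁ - x₂)) * (θ x₂ - θ x₁) ^ 2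
      ≤ ∫ x in x₂..x₁, hilbertEven θ x * deriv θ x := by
  obtain ⟨M, hM⟩ := hbdd
  set c := log ((x₁ + x₂) / (x₁ - x₂))
  have hc : 0 ≤ c := log_nonneg (by rw [le_div_iff₀ (by linarith)]; linarith)
  have hψ : Continuous fun x => c / π * ((θ x₂ - θ x) * -deriv θ x) := by
    have := hC1.continuous_deriv le_rfl
    have := hC1.continuous
    fun_prop
  calc 1 / (4 * π) * c * (θ x₂ - θ x₁) ^ 2 ≤ c / π * ((θ x₂ - θ x₁) ^ 2 / 2) := by
        have hgap : 0 ≤ c * (θ x₂ - θ x₁) ^ 2 / (4 * π) := by positivity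
        have : c / π * ((θ x₂ - θ x₁) ^ 2 / 2)
            = 1 / (4 * π) * c * (θ x₂ - θ x₁) ^ 2 + c * (θ x₂ - θ x₁) ^ 2 / (4 * π) := by
          field_simp
          ring
        linarith
    _ = ∫ x in x₂..x₁, c / π * ((θ x₂ - θ x) * -deriv θ x) := by
        rw [intervalIntegral.integral_const_mul, integral_sub_mul_neg_deriv hC1]
    _ ≤ ∫ x in x₂..x₁, hilbertEven θ x * deriv θ x :=
        intervalIntegral.integral_mono_on_of_le_Ioo hx₁.le (hψ.intervalIntegrable _ _)
          (intervalIntegrable_hilbertEven_mul_deriv hC1 hM hx₂ hx₁.le) fun x hx =>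
          log_div_mul_le_hilbertEven_mul_deriv hC1 hM hmono hx₂ hx.1 hx.2.le

/-- Theorem: for a `C¹`, bounded, even function `θ` nonincreasing on `[0,∞)` and any
`0 < x₂ < x₁`,
`∫_{x₂}^{x₁} Hθ(x)·θ'(x) dx ≥ (1/(4π))·log((x₁+x₂)/(x₁-x₂))·(θ(x₂)-θ(x₁))²`. -/
theorem stmt_13 (θ : ℝ → ℝ)
    (hC1 : ContDiff ℝ 1 θ)
    (hbdd : ∃ M : ℝ, ∀ x : ℝ, |θ x| ≤ M)
    (heven : ∀ x : ℝ, θ (-x) = θ x)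
    (hmono : AntitoneOn θ (Set.Ici 0))
    (x₁ x₂ : ℝ) (hx₂ : 0 < x₂) (hx₁ : x₂ < x₁) :
    (1 / (4 * Real.pi)) * Real.log ((x₁ + x₂) / (x₁ - x₂)) * (θ x₂ - θ x₁) ^ 2
      ≤ ∫ x in x₂..x₁, hilbertEven θ x * deriv θ x :=
  stmt_13_general θ hC1 hbdd hmono x₁ x₂ hx₂ hx₁
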